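/- arXiv:1701.04196 — 4 statements merged into one kernel-verified Lean document; each statement's English description precedes it below -/
import Mathlib

section
/- A bounded function f : ℤ → ℂ belongs to B_ℤ if and only if f(k) → 0 as k → −∞ and the limit lim_{k→∞} f(k) exists in ℂ. -/
/-!
Both conditions define closed subspaces of `ℓ∞(ℤ, ℂ)`: by the Moore–Osgood theorem a uniform
limit of functions with limits along a filter tends to the limit of those limits, which exist
because they form a Cauchy sequence. Every `1_n`
satisfies them, so `B_ℤ` lies in their intersection. Conversely, if `f → 0` at `−∞` and
`f → c` at `+∞`, then `c • 1_b + ∑_{a ≤ n < b} f n • (1_n − 1_{n+1})` vanishes below `a`,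
agrees with `f` on `[a, b)` and equals `c` from `b` on, so it is uniformly close to `f` once
`a` is small and `b` is large.
-/

open BoundedContinuousFunction Filter Topology

/-- The indicator function of `{k : ℤ | n ≤ k}` as a bounded (continuous) function `ℤ → ℂ`,
an element of `ℓ∞(ℤ, ℂ)`. -/
noncomputable def indBZ (n : ℤ) : ℤ →ᵇ ℂ :=
  BoundedContinuousFunction.ofNormedAddCommGroup
    (fun k => if n ≤ k then (1:ℂ) else 0)
    (continuous_of_discreteTopology) 1
    (fun k => by by_cases h : n ≤ k <;> simp [h])

/-- `B_ℤ`: the closed linear span of `{1_n : n ∈ ℤ}` in `ℓ∞(ℤ, ℂ)`. -/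
noncomputable def BZ : Submodule ℂ (ℤ →ᵇ ℂ) :=
  (Submodule.span ℂ (Set.range indBZ)).topologicalClosure

namespace BoundedContinuousFunction

section Metric

variable {α β : Type*} [TopologicalSpace α] [PseudoMetricSpace β]

theorem dist_le_dist_of_tendsto {l : Filter α} [l.NeBot] {f g : α →ᵇ β} {a b : β}
    (hf : Tendsto f l (𝓝 a)) (hg : Tendsto g l (𝓝 b)) : dist a b ≤ dist f g :=
  le_of_tendsto (hf.dist hg) (Eventually.of_forall fun x => dist_coe_le_dist x)

theorem isClosed_setOf_tendsto (l : Filter α) (b : β) :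
    IsClosed {f : α →ᵇ β | Tendsto f l (𝓝 b)} :=
  IsSeqClosed.isClosed fun _ _ hg hgf => (tendsto_iff_tendstoUniformly.1 hgf)
    |>.tendsto_of_eventually_tendsto (Eventually.of_forall hg) tendsto_const_nhds

theorem isClosed_setOf_exists_tendsto [CompleteSpace β] (l : Filter α) [l.NeBot] :
    IsClosed {f : α →ᵇ β | ∃ b, Tendsto f l (𝓝 b)} := by
  refine IsSeqClosed.isClosed fun g f hg hgf => ?_
  choose b hb using hg
  have hb_cauchy : CauchySeq b := by
    have hg_cauchy := hgf.cauchySeq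
    rw [Metric.cauchySeq_iff] at hg_cauchy ⊢
    intro ε hε
    obtain ⟨N, hN⟩ := hg_cauchy ε hε
    exact ⟨N, fun m hm n hn =>
      (dist_le_dist_of_tendsto (hb m) (hb n)).trans_lt (hN m hm n hn)⟩
  obtain ⟨c, hc⟩ := cauchySeq_tendsto_of_complete hb_cauchy
  exact ⟨c, (tendsto_iff_tendstoUniformly.1 hgf).tendsto_of_eventually_tendsto
    (Eventually.of_forall hb) hc⟩

end Metric

section Submodules

variable {α 𝕜 E : Type*} [TopologicalSpace α] [NormedField 𝕜] [SeminormedAddCommGroup E]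
  [NormedSpace 𝕜 E] (l : Filter α)

variable (𝕜 E) in
def tendstoZeroSubmodule : Submodule 𝕜 (α →ᵇ E) where
  carrier := {f | Tendsto f l (𝓝 0)}
  add_mem' hf hg := by rw [← add_zero (0 : E)]; exact hf.add hg
  zero_mem' := tendsto_const_nhds
  smul_mem' c _ hf := by simpa using hf.const_smul c

variable (𝕜 E) in
def convergentSubmodule : Submodule 𝕜 (α →ᵇ E) where
  carrier := {f | ∃ b, Tendsto f l (𝓝 b)}
  add_mem' := fun ⟨a, ha⟩ ⟨b, hb⟩ => ⟨a + b, ha.add hb⟩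
  zero_mem' := ⟨0, tendsto_const_nhds⟩
  smul_mem' c _ := fun ⟨b, hb⟩ => ⟨c • b, hb.const_smul c⟩

end Submodules

end BoundedContinuousFunction

theorem indBZ_apply (n k : ℤ) : indBZ n k = if n ≤ k then 1 else 0 := rfl

theorem indBZ_sub_indBZ_add_one_apply (n k : ℤ) :
    (indBZ n - indBZ (n + 1)) k = if k = n then 1 else 0 := by
  simp only [coe_sub, Pi.sub_apply, indBZ_apply]
  split_ifs <;> first | omega | norm_num

noncomputable def truncBZ (u : ℤ → ℂ) (a b : ℤ) (c : ℂ) : ℤ →ᵇ ℂ :=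
  c • indBZ b + ∑ n ∈ Finset.Ico a b, u n • (indBZ n - indBZ (n + 1))

theorem truncBZ_mem_span (u : ℤ → ℂ) (a b : ℤ) (c : ℂ) :
    truncBZ u a b c ∈ Submodule.span ℂ (Set.range indBZ) := by
  have hind (n : ℤ) : indBZ n ∈ Submodule.span ℂ (Set.range indBZ) :=
    Submodule.subset_span ⟨n, rfl⟩
  exact Submodule.add_mem _ (Submodule.smul_mem _ _ (hind b)) <| Submodule.sum_mem _ fun n _ =>
    Submodule.smul_mem _ _ (Submodule.sub_mem _ (hind n) (hind (n + 1)))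

theorem truncBZ_apply (u : ℤ → ℂ) (a b : ℤ) (c : ℂ) (k : ℤ) :
    truncBZ u a b c k = if b ≤ k then c else if a ≤ k then u k else 0 := by
  simp only [truncBZ, coe_add, coe_smul, coe_sum, Pi.add_apply, Finset.sum_apply,
    indBZ_sub_indBZ_add_one_apply, indBZ_apply, smul_eq_mul, mul_ite, mul_one, mul_zero,
    Finset.sum_ite_eq, Finset.mem_Ico]
  split_ifs <;> first | omega | simp

theorem mem_BZ_of_tendsto {f : ℤ →ᵇ ℂ} {c : ℂ} (hbot : Tendsto f atBot (𝓝 0))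
    (htop : Tendsto f atTop (𝓝 c)) : f ∈ BZ := by
  refine Metric.mem_closure_iff.2 fun ε hε => ?_
  obtain ⟨a, ha⟩ := eventually_atBot.1 (Metric.tendsto_nhds.1 hbot (ε / 2) (half_pos hε))
  obtain ⟨b, hb⟩ := eventually_atTop.1 (Metric.tendsto_nhds.1 htop (ε / 2) (half_pos hε))
  refine ⟨truncBZ f a b c, truncBZ_mem_span f a b c, ?_⟩
  refine ((dist_le (half_pos hε).le).2 fun k => ?_).trans_lt (half_lt_self hε)
  rw [truncBZ_apply]
  split_ifs with hbk hak
  · exact (hb k hbk).le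
  · simpa using (half_pos hε).le
  · exact (ha k (by omega)).le

theorem BZ_le_of_isClosed {p : Submodule ℂ (ℤ →ᵇ ℂ)} (hp : IsClosed (p : Set (ℤ →ᵇ ℂ)))
    (hind : ∀ n, indBZ n ∈ p) : BZ ≤ p :=
  Submodule.topologicalClosure_minimal _ (Submodule.span_le.2 (Set.range_subset_iff.2 hind)) hp

theorem tendsto_indBZ_atBot (n : ℤ) : Tendsto (indBZ n) atBot (𝓝 0) :=
  tendsto_const_nhds.congr' <| (eventually_lt_atBot n).mono fun k hk => by
    simp [indBZ_apply, not_le.2 hk]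

theorem tendsto_indBZ_atTop (n : ℤ) : Tendsto (indBZ n) atTop (𝓝 1) :=
  tendsto_const_nhds.congr' <| (eventually_ge_atTop n).mono fun k hk => by
    simp [indBZ_apply, hk]

/-- A bounded function `f : ℤ → ℂ` belongs to `B_ℤ` if and only if `f k → 0` as `k → −∞`
and `lim_{k → ∞} f k` exists in `ℂ`. -/
theorem mem_BZ_iff (f : ℤ →ᵇ ℂ) :
    f ∈ BZ ↔
      Tendsto (fun k : ℤ => f k) atBot (𝓝 (0 : ℂ)) ∧
        ∃ L : ℂ, Tendsto (fun k : ℤ => f k) atTop (𝓝 L) := by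
  constructor
  · intro hf
    exact ⟨BZ_le_of_isClosed (p := tendstoZeroSubmodule ℂ ℂ atBot) (isClosed_setOf_tendsto _ _)
        tendsto_indBZ_atBot hf,
      BZ_le_of_isClosed (p := convergentSubmodule ℂ ℂ atTop) (isClosed_setOf_exists_tendsto _)
        (fun n => ⟨1, tendsto_indBZ_atTop n⟩) hf⟩
  · rintro ⟨hbot, L, htop⟩
    exact mem_BZ_of_tendsto hbot htop
end

section
/- Suppose π is nonzero and irreducible in the sense that for every nonzero h ∈ H the set {π(a)h : a ∈ A} is dense in H. Then for every nonzero ξ ∈ ℓ²(ℕ, H), the closed linear span of {V_n* Π(a)(1 − V*V) V_m ξ : a ∈ A, n, m ∈ ℕ} is all of ℓ²(ℕ, H); that is, every nonzero vector is cyclic for this family of operators. -/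
open scoped ENNReal

/- `A` is a C*-algebra, `α` an automorphism of `A`, `H` a Hilbert space, `π : A → B(H)` a
representation, `Pi` is the representation `Π` of `A` on `ℓ²(ℕ, H)` given by
`(Π(a)ξ)(k) = π(α^k(a))(ξ(k))`, and `V m` is the operator `V_m` on `ℓ²(ℕ, H)` given by
`(V_m ξ)(k) = ξ(k + m)`. -/
variable {A H : Type*}
  [NonUnitalNormedRing A] [StarRing A] [CStarRing A] [NormedSpace ℂ A]
  [IsScalarTower ℂ A A] [SMulCommClass ℂ A A] [StarModule ℂ A] [CompleteSpace A]
  [NormedAddCommGroup H] [InnerProductSpace ℂ H] [CompleteSpace H]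
  (α : A ≃⋆ₐ[ℂ] A) (π : A →⋆ₙₐ[ℂ] (H →L[ℂ] H))
  (Pi : A → (lp (fun _ : ℕ => H) 2 →L[ℂ] lp (fun _ : ℕ => H) 2))
  (V : ℕ → (lp (fun _ : ℕ => H) 2 →L[ℂ] lp (fun _ : ℕ => H) 2))

/- A nonzero `ξ` has a nonzero coordinate `ξ m`, and the operators of the family send `ξ` to
`e_n ⊗ π(a)(ξ m)`. Irreducibility makes these dense in each copy `e_n ⊗ H`, and the copies
together span a dense subspace of `ℓ²(ℕ, H)`. -/

namespace lp

variable {ι 𝕜 : Type*} [DecidableEq ι] {E : ι → Type*} {p : ℝ≥0∞} [Fact (1 ≤ p)]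
  [NormedField 𝕜] [∀ i, NormedAddCommGroup (E i)] [∀ i, NormedSpace 𝕜 (E i)]

theorem eq_top_of_forall_single_mem (hp : p ≠ ⊤) {K : Submodule 𝕜 (lp E p)}
    (hK : IsClosed (K : Set (lp E p))) (h : ∀ i x, lp.single p i x ∈ K) : K = ⊤ :=
  eq_top_iff.2 fun f _ => hK.mem_of_tendsto (lp.hasSum_single hp f)
    (Filter.Eventually.of_forall fun _ => K.sum_mem fun i _ => h i (f i))

theorem single_mem_of_dense {K : Set (lp E p)} (hK : IsClosed K) {i : ι} {S : Set (E i)}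
    (hS : Dense S) (hSK : ∀ x ∈ S, lp.single p i x ∈ K) (x : E i) :
    lp.single p i x ∈ K := by
  have hclosed : IsClosed {x : E i | lp.single p i x ∈ K} :=
    hK.preimage (lp.isometry_single i).continuous
  exact hclosed.closure_subset_iff.2 hSK (hS.closure_eq ▸ Set.mem_univ x)

end lp

section OperatorsOnEllTwo

variable {𝕜 E : Type*} [RCLike 𝕜] [NormedAddCommGroup E] [InnerProductSpace 𝕜 E]
  {T : lp (fun _ : ℕ => E) 2 →L[𝕜] lp (fun _ : ℕ => E) 2}

theorem star_shift_apply_single [CompleteSpace E] {n : ℕ} (hT : ∀ ξ k, T ξ k = ξ (k + n))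
    (j : ℕ) (u : E) :
    star T (lp.single 2 j u) = lp.single 2 (j + n) u := by
  refine ext_inner_right 𝕜 fun w => ?_
  rw [ContinuousLinearMap.star_eq_adjoint, ContinuousLinearMap.adjoint_inner_left,
    lp.inner_single_left, lp.inner_single_left, hT]

theorem one_sub_star_shift_mul_shift_apply [CompleteSpace E] (hT : ∀ ξ k, T ξ k = ξ (k + 1))
    (η : lp (fun _ : ℕ => E) 2) : (1 - star T * T) η = lp.single 2 0 (η 0) := by
  suffices star T (T η) = η - lp.single 2 0 (η 0) by
    rw [sub_apply, one_apply_eq_self, mul_apply_eq_comp, this, sub_sub_cancel]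
  refine ext_inner_right 𝕜 fun w => ?_
  rw [ContinuousLinearMap.star_eq_adjoint, ContinuousLinearMap.adjoint_inner_left,
    inner_sub_left, lp.inner_single_left, lp.inner_eq_tsum, lp.inner_eq_tsum η w,
    Summable.tsum_eq_zero_add (f := fun i => inner 𝕜 (η i) (w i)) (lp.summable_inner η w)]
  simp only [hT, add_sub_cancel_left]

theorem diagonal_apply_single {D : ℕ → E →L[𝕜] E} (hT : ∀ ξ k, T ξ k = D k (ξ k))
    (j : ℕ) (u : E) :
    T (lp.single 2 j u) = lp.single 2 j (D j u) := by
  ext k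
  rw [hT]
  rcases eq_or_ne k j with rfl | hkj
  · simp only [lp.single_apply_self]
  · rw [lp.single_apply_ne _ _ _ hkj, lp.single_apply_ne _ _ _ hkj, map_zero]

end OperatorsOnEllTwo

theorem cyclic_vectors
    (hPi : ∀ (a : A) (ξ : lp (fun _ : ℕ => H) 2) (k : ℕ),
      (Pi a ξ) k = π ((⇑α)^[k] a) (ξ k))
    (hV : ∀ (m : ℕ) (ξ : lp (fun _ : ℕ => H) 2) (k : ℕ), (V m ξ) k = ξ (k + m))
    (hirr : ∀ h : H, h ≠ 0 → Dense (Set.range fun a : A => π a h)) :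
    ∀ ξ : lp (fun _ : ℕ => H) 2, ξ ≠ 0 →
      (Submodule.span ℂ
        {η : lp (fun _ : ℕ => H) 2 | ∃ (a : A) (n m : ℕ),
          η = (star (V n) * Pi a * (1 - star (V 1) * V 1) * V m) ξ}).topologicalClosure = ⊤ := by
  intro ξ hξ
  have orbit_eq : ∀ (a : A) (n m : ℕ),
      (star (V n) * Pi a * (1 - star (V 1) * V 1) * V m) ξ = lp.single 2 n (π a (ξ m)) := by
    intro a n m
    simp only [mul_apply_eq_comp, one_sub_star_shift_mul_shift_apply (hV 1), hV, zero_add,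
      diagonal_apply_single (hPi a), Function.iterate_zero_apply, star_shift_apply_single (hV n)]
  obtain ⟨m, hm⟩ : ∃ m, ξ m ≠ 0 := by
    by_contra! h
    exact hξ (lp.ext (funext h))
  refine lp.eq_top_of_forall_single_mem ENNReal.ofNat_ne_top
    (Submodule.isClosed_topologicalClosure _) fun n => ?_
  refine lp.single_mem_of_dense (E := fun _ : ℕ => H) (Submodule.isClosed_topologicalClosure _)
    (hirr _ hm) ?_
  rintro _ ⟨a, rfl⟩
  exact Submodule.le_topologicalClosure _
    (Submodule.subset_span ⟨a, n, m, (orbit_eq a n m).symm⟩)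
end

section
/- (a) For every m ∈ ℤ and y ∈ Y, the closure of the ℤ-orbit of ((m : Z∞), y) in Z∞ × Y equals Z∞ × cl{y}, where cl{y} is the closure of {y} in Y. (b) For every y ∈ Y, the closure of the ℤ-orbit of (∞, y) in Z∞ × Y equals {∞} × cl(ℤ·y), where ℤ·y = {σⁿ(y) : n ∈ ℤ} is the ℤ-orbit of y in Y. -/
open Filter Topology

/-- The order topology on `Z∞ = ℤ ∪ {∞}` (formally `WithTop ℤ`): every `n ∈ ℤ` is isolated,
and the sets `J_n = {k : ℤ | n ≤ k} ∪ {∞}` form a neighborhood basis at `∞`. -/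
noncomputable instance : TopologicalSpace (WithTop ℤ) := Preorder.topology (WithTop ℤ)

instance : OrderTopology (WithTop ℤ) := ⟨rfl⟩

/-- The integer power `σⁿ` (`n : ℤ`) of a homeomorphism `σ : Y ≃ₜ Y`, as a function. -/
def sigmaPow {Y : Type*} [TopologicalSpace Y] (σ : Y ≃ₜ Y) (n : ℤ) : Y → Y :=
  fun y => (σ.toEquiv ^ n) y

/-- The action of `ℤ` on `Z∞ × Y`: `n·(m, y) = (m + n, y)` for `m ∈ ℤ`, and
`n·(∞, y) = (∞, σⁿ(y))`. -/
def actZ {Y : Type*} [TopologicalSpace Y] (σ : Y ≃ₜ Y) (n : ℤ) (p : WithTop ℤ × Y) :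
    WithTop ℤ × Y :=
  (p.1.map (· + n), if p.1 = ⊤ then sigmaPow σ n p.2 else p.2)

/-! Both orbits are products: a finite point moves along all of `ℤ` with fixed second
coordinate, while `∞` is fixed and the second coordinate runs through the `σ`-orbit.
Closures of products are products of closures; `ℤ` is dense in `Z∞` and `{∞}` is closed. -/

theorem WithTop.denseRange_coe_of_noMaxOrder {α : Type*} [LinearOrder α] [Nonempty α]
    [NoMaxOrder α] [TopologicalSpace (WithTop α)] [OrderTopology (WithTop α)] :
    DenseRange ((↑) : α → WithTop α) := by
  intro x
  induction x with
  | top =>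
    rw [mem_closure_iff_nhds_basis nhds_top_basis]
    rintro (_ | a) ha
    · exact absurd ha (lt_irrefl _)
    · obtain ⟨b, hab⟩ := exists_gt a
      exact ⟨b, ⟨b, rfl⟩, WithTop.coe_lt_coe.2 hab⟩
  | coe a => exact subset_closure ⟨a, rfl⟩

section Orbits

variable {Y : Type*} [TopologicalSpace Y] (σ : Y ≃ₜ Y)

theorem range_actZ_coe (m : ℤ) (y : Y) :
    (Set.range fun n : ℤ => actZ σ n ((m : WithTop ℤ), y)) =
      Set.range ((↑) : ℤ → WithTop ℤ) ×ˢ {y} := by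
  ext ⟨a, b⟩
  simp only [actZ, Set.mem_range, Set.mem_prod, Set.mem_singleton_iff, Prod.mk.injEq,
    WithTop.map_coe, WithTop.coe_ne_top, if_false]
  constructor
  · rintro ⟨n, rfl, rfl⟩
    exact ⟨⟨m + n, rfl⟩, rfl⟩
  · rintro ⟨⟨k, rfl⟩, rfl⟩
    exact ⟨k - m, by rw [add_sub_cancel], rfl⟩

theorem range_actZ_top (y : Y) :
    (Set.range fun n : ℤ => actZ σ n ((⊤ : WithTop ℤ), y)) =
      {⊤} ×ˢ Set.range fun n : ℤ => sigmaPow σ n y := by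
  ext ⟨a, b⟩
  simp only [actZ, Set.mem_range, Set.mem_prod, Set.mem_singleton_iff, Prod.mk.injEq,
    WithTop.map_top, if_true]
  constructor
  · rintro ⟨n, rfl, rfl⟩
    exact ⟨rfl, n, rfl⟩
  · rintro ⟨rfl, n, rfl⟩
    exact ⟨n, rfl, rfl⟩

end Orbits

/-- (a) The closure of the `ℤ`-orbit of `((m : Z∞), y)` equals `Z∞ × cl{y}`.
(b) The closure of the `ℤ`-orbit of `(∞, y)` equals `{∞} × cl(ℤ·y)`. -/
theorem closure_orbit_actZ {Y : Type*} [TopologicalSpace Y] (σ : Y ≃ₜ Y) :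
    (∀ (m : ℤ) (y : Y),
      closure (Set.range fun n : ℤ => actZ σ n ((m : WithTop ℤ), y)) =
        (Set.univ : Set (WithTop ℤ)) ×ˢ closure {y}) ∧
    (∀ y : Y,
      closure (Set.range fun n : ℤ => actZ σ n ((⊤ : WithTop ℤ), y)) =
        ({⊤} : Set (WithTop ℤ)) ×ˢ closure (Set.range fun n : ℤ => sigmaPow σ n y)) := by
  refine ⟨fun m y => ?_, fun y => ?_⟩
  · rw [range_actZ_coe, closure_prod_eq, WithTop.denseRange_coe_of_noMaxOrder.closure_range]
  · rw [range_actZ_top, closure_prod_eq, closure_singleton]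
end

section
/- Suppose Y is Hausdorff, and let Q denote the quotient of (Z∞ × Y) × 𝕋 by the Williams relation for the ℤ-action on Z∞ × Y, and let R denote the quotient of Y × 𝕋 by the Williams relation for the ℤ-action n·y = σⁿ(y) on Y, both with quotient topologies. Then the map ĵ : R → Q sending the class of (φ, z) to the class of ((∞, φ), z) is well defined and is a homeomorphism of R onto the subset of Q consisting of classes of points with first coordinate ∞; this subset is closed in Q and equals the complement of the image of ι : Y → Q, φ ↦ [((0, φ), 1)]. -/
open Filter Topology

/-- The Williams relation on `X × 𝕋` associated to an action `act` of `ℤ` on a topological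
space `X`: `(x, z) ∼ (y, w)` iff the closures of the `ℤ`-orbits of `x` and `y` coincide and
`zⁿ = wⁿ` for all `n` in the stability group of `x`. -/
def williams {X : Type*} [TopologicalSpace X] (act : ℤ → X → X)
    (p q : X × Circle) : Prop :=
  closure (Set.range fun n : ℤ => act n p.1) = closure (Set.range fun n : ℤ => act n q.1) ∧
  ∀ n : ℤ, act n p.1 = p.1 → p.2 ^ n = q.2 ^ n

/-- The map `ι : Y → Q` into the quotient `Q` of `(Z∞ × Y) × 𝕋` by the Williams relation,
sending `φ` to the class of `((0, φ), 1)`. -/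
noncomputable def iotaQ {Y : Type*} [TopologicalSpace Y] (σ : Y ≃ₜ Y) :
    Y → Quot (williams (actZ σ)) :=
  fun φ => Quot.mk _ ((((0 : ℤ) : WithTop ℤ), φ), (1 : Circle))

/-! The slice `{∞} × Y` of `Z∞ × Y` is closed and invariant, so a point is Williams-related
only to points on the same side of it, and on the slice `actZ` is the action of `σ`. Hence
`[((∞, φ), z)] ↦ [(φ, z)]`, `[((k, φ), z)] ↦ none` is a well-defined partial inverse
`Q → Option R` of `ĵ`. It makes `ĵ` injective, and it shows that the preimage in
`(Z∞ × Y) × 𝕋` of `ĵ '' C` is `{∞} × (preimage of C)`, closed for closed `C`. The points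
`(k, φ)` with `k ∈ ℤ` all lie in one free orbit, so each is equivalent to `((0, φ), 1) = ι φ`. -/

open Set

theorem williams.mem_iff_of_isClosed {X : Type*} [TopologicalSpace X] {act : ℤ → X → X}
    (act_zero : ∀ x, act 0 x = x) {S : Set X} (hS : IsClosed S)
    (hS_inv : ∀ n, ∀ x ∈ S, act n x ∈ S) {p q : X × Circle} (h : williams act p q) :
    p.1 ∈ S ↔ q.1 ∈ S := by
  have closure_orbit_subset : ∀ x ∈ S, closure (range fun n : ℤ => act n x) ⊆ S :=
    fun x hx => closure_minimal (range_subset_iff.2 fun n => hS_inv n x hx) hS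
  have mem_closure_orbit : ∀ x, x ∈ closure (range fun n : ℤ => act n x) :=
    fun x => subset_closure ⟨0, act_zero x⟩
  constructor
  · exact fun hp => closure_orbit_subset _ hp (h.1 ▸ mem_closure_orbit q.1)
  · exact fun hq => closure_orbit_subset _ hq (h.1 ▸ mem_closure_orbit p.1)

section

variable {Y : Type*} [TopologicalSpace Y] (σ : Y ≃ₜ Y)

@[simp]
theorem actZ_coe (n k : ℤ) (y : Y) :
    actZ σ n ((k : WithTop ℤ), y) = (((k + n : ℤ) : WithTop ℤ), y) := by
  simp [actZ]

@[simp]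
theorem actZ_top (n : ℤ) (y : Y) : actZ σ n (⊤, y) = (⊤, sigmaPow σ n y) := by
  simp [actZ]

theorem actZ_zero (p : WithTop ℤ × Y) : actZ σ 0 p = p := by
  obtain ⟨m, y⟩ := p
  induction m using WithTop.recTopCoe <;> simp [actZ, sigmaPow]

theorem williams_actZ_fst_eq_top_iff {p q : (WithTop ℤ × Y) × Circle}
    (h : williams (actZ σ) p q) : p.1.1 = ⊤ ↔ q.1.1 = ⊤ :=
  williams.mem_iff_of_isClosed (actZ_zero σ) (S := {x | x.1 = ⊤})
    (isClosed_singleton.preimage continuous_fst) (fun _ _ hx => WithTop.map_eq_top_iff.2 hx) h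

theorem closure_range_actZ_top (φ : Y) :
    closure (range fun n : ℤ => actZ σ n (⊤, φ)) =
      Prod.mk ⊤ '' closure (range fun n : ℤ => sigmaPow σ n φ) := by
  rw [← singleton_prod, ← closure_singleton, ← closure_prod_eq, singleton_prod, ← range_comp]
  simp only [actZ_top, Function.comp_def]

theorem williams_actZ_top_iff {φ φ' : Y} {z z' : Circle} :
    williams (actZ σ) ((⊤, φ), z) ((⊤, φ'), z') ↔ williams (sigmaPow σ) (φ, z) (φ', z') := by
  rw [williams, williams, closure_range_actZ_top, closure_range_actZ_top,
    (Prod.mk_right_injective _).image_injective.eq_iff]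
  simp only [actZ_top, Prod.mk.injEq, true_and]

theorem williams_actZ_coe (k : ℤ) (φ : Y) (z : Circle) :
    williams (actZ σ) (((0 : ℤ), φ), 1) (((k : ℤ), φ), z) := by
  have range_orbit : ∀ m : ℤ, (range fun n : ℤ => actZ σ n ((m : WithTop ℤ), φ)) =
      range fun n : ℤ => ((n : WithTop ℤ), φ) := fun m => by
    simp only [actZ_coe]
    exact (Equiv.addLeft m).surjective.range_comp fun n : ℤ => ((n : WithTop ℤ), φ)
  refine ⟨by rw [range_orbit, range_orbit], fun n hn => ?_⟩
  rw [actZ_coe] at hn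
  obtain rfl : n = 0 := by simpa using hn
  simp

def jhat : Quot (williams (sigmaPow σ)) → Quot (williams (actZ σ)) :=
  Quot.map (fun p => ((⊤, p.1), p.2)) fun _ _ => (williams_actZ_top_iff σ).2

def jhatPartialInv : Quot (williams (actZ σ)) → Option (Quot (williams (sigmaPow σ))) :=
  Quot.lift (fun x => if x.1.1 = ⊤ then some (Quot.mk _ (x.1.2, x.2)) else none) <| by
    rintro ⟨⟨m, φ⟩, z⟩ ⟨⟨m', φ'⟩, z'⟩ h
    have top_iff : m = ⊤ ↔ m' = ⊤ := williams_actZ_fst_eq_top_iff σ h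
    by_cases hm : m = ⊤
    · obtain rfl := hm
      obtain rfl := top_iff.1 rfl
      simpa using Quot.sound ((williams_actZ_top_iff σ).1 h)
    · simp [hm, top_iff.not.1 hm]

@[simp]
theorem jhat_mk (φ : Y) (z : Circle) : jhat σ (Quot.mk _ (φ, z)) = Quot.mk _ ((⊤, φ), z) :=
  rfl

@[simp]
theorem jhatPartialInv_jhat (r : Quot (williams (sigmaPow σ))) :
    jhatPartialInv σ (jhat σ r) = some r := by
  induction r using Quot.ind
  rfl

theorem jhatPartialInv_eq_some_iff {q : Quot (williams (actZ σ))}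
    {r : Quot (williams (sigmaPow σ))} : jhatPartialInv σ q = some r ↔ jhat σ r = q := by
  refine ⟨fun h => ?_, fun h => h ▸ jhatPartialInv_jhat σ r⟩
  induction q using Quot.ind with | mk x => ?_
  obtain ⟨⟨m, φ⟩, z⟩ := x
  induction m using WithTop.recTopCoe with
  | top => obtain rfl := Option.some_injective _ h.symm; rfl
  | coe k => simp [jhatPartialInv] at h

theorem jhatPartialInv_eq_none_iff {q : Quot (williams (actZ σ))} :
    jhatPartialInv σ q = none ↔ q ∈ range (iotaQ σ) := by
  constructor
  · induction q using Quot.ind with | mk x => ?_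
    obtain ⟨⟨m, φ⟩, z⟩ := x
    induction m using WithTop.recTopCoe with
    | top => simp [jhatPartialInv]
    | coe k => exact fun _ => ⟨φ, Quot.sound (williams_actZ_coe σ k φ z)⟩
  · rintro ⟨φ, rfl⟩
    simp [jhatPartialInv, iotaQ]

theorem jhat_injective : Function.Injective (jhat σ) := fun r r' h =>
  Option.some_injective _ <| by rw [← jhatPartialInv_jhat σ r, h, jhatPartialInv_jhat]

theorem continuous_jhat : Continuous (jhat σ) :=
  isQuotientMap_quot_mk.continuous_iff.2 <| continuous_quot_mk.comp (by fun_prop)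

theorem preimage_mk_image_jhat (C : Set (Quot (williams (sigmaPow σ)))) :
    Quot.mk _ ⁻¹' (jhat σ '' C) = {x | x.1.1 = ⊤ ∧ Quot.mk _ (x.1.2, x.2) ∈ C} := by
  have image_eq : jhat σ '' C = jhatPartialInv σ ⁻¹' (some '' C) := by
    ext q
    simp only [mem_image, mem_preimage, eq_comm (b := jhatPartialInv σ q),
      jhatPartialInv_eq_some_iff]
  ext ⟨⟨m, φ⟩, z⟩
  induction m using WithTop.recTopCoe <;> simp [image_eq, jhatPartialInv]

theorem isClosedMap_jhat : IsClosedMap (jhat σ) := fun C hC => by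
  rw [← isQuotientMap_quot_mk.isClosed_preimage, preimage_mk_image_jhat]
  exact (isClosed_singleton.preimage (by fun_prop)).inter (hC.preimage (by fun_prop))

theorem isClosedEmbedding_jhat : IsClosedEmbedding (jhat σ) :=
  .of_continuous_injective_isClosedMap (continuous_jhat σ) (jhat_injective σ) (isClosedMap_jhat σ)

theorem range_jhat :
    range (jhat σ) = {q | ∃ (φ : Y) (z : Circle), q = Quot.mk _ ((⊤, φ), z)} := by
  ext q
  constructor
  · rintro ⟨r, rfl⟩
    induction r using Quot.ind with | mk p => exact ⟨p.1, p.2, rfl⟩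
  · rintro ⟨φ, z, rfl⟩
    exact ⟨Quot.mk _ (φ, z), rfl⟩

theorem range_jhat_eq_compl_range_iotaQ : range (jhat σ) = (range (iotaQ σ))ᶜ := by
  ext q
  rw [mem_compl_iff, ← jhatPartialInv_eq_none_iff, ← ne_eq, Option.ne_none_iff_exists']
  simp [jhatPartialInv_eq_some_iff]

end

theorem jhat_properties_general {Y : Type*} [TopologicalSpace Y] (σ : Y ≃ₜ Y) :
    ∃ j : Quot (williams (fun (n : ℤ) (y : Y) => sigmaPow σ n y)) →
        Quot (williams (actZ σ)),
      (∀ (φ : Y) (z : Circle),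
        j (Quot.mk _ (φ, z)) = Quot.mk _ (((⊤ : WithTop ℤ), φ), z)) ∧
      Topology.IsEmbedding j ∧
      Set.range j =
        {q : Quot (williams (actZ σ)) | ∃ (φ : Y) (z : Circle),
          q = Quot.mk _ (((⊤ : WithTop ℤ), φ), z)} ∧
      IsClosed (Set.range j) ∧
      Set.range j = (Set.range (iotaQ σ))ᶜ :=
  ⟨jhat σ, jhat_mk σ, (isClosedEmbedding_jhat σ).isEmbedding, range_jhat σ,
    (isClosedEmbedding_jhat σ).isClosed_range, range_jhat_eq_compl_range_iotaQ σ⟩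

/-- For Hausdorff `Y`, the map `ĵ : R → Q`, `[(φ, z)] ↦ [((∞, φ), z)]`, is well defined and
is a homeomorphism of `R` onto the subset of `Q` consisting of classes of points with first
coordinate `∞`; this subset is closed in `Q` and equals the complement of the image of
`ι : Y → Q`. -/
theorem jhat_properties {Y : Type*} [TopologicalSpace Y] [T2Space Y] (σ : Y ≃ₜ Y) :
    ∃ j : Quot (williams (fun (n : ℤ) (y : Y) => sigmaPow σ n y)) →
        Quot (williams (actZ σ)),
      (∀ (φ : Y) (z : Circle),
        j (Quot.mk _ (φ, z)) = Quot.mk _ (((⊤ : WithTop ℤ), φ), z)) ∧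
      Topology.IsEmbedding j ∧
      Set.range j =
        {q : Quot (williams (actZ σ)) | ∃ (φ : Y) (z : Circle),
          q = Quot.mk _ (((⊤ : WithTop ℤ), φ), z)} ∧
      IsClosed (Set.range j) ∧
      Set.range j = (Set.range (iotaQ σ))ᶜ :=
  jhat_properties_general σ
end
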